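/- arXiv:2405.08206 — 4 statements merged into one kernel-verified Lean document; each statement's English description precedes it below -/
import Mathlib

section
/- Fix γ ∈ (0,1). With agent 2's strategy fixed to a₂ = s at every state, the discounted value to agent 1 of the stationary policy a₁ = 1 started at any state s (value (s - 4/(2-s)) + γ/(1-γ)·(1 - 4)) is strictly less than the value of the stationary policy a₁ = 0 (value (s - 4/(2-s)) + γ/(1-γ)·(0 - 2)). Hence the joint strategy (a₁, a₂) = (1, s), which is optimal for the dual MDP with payoff Φ, is not a Nash equilibrium of the original game. -/
open Set

noncomputable def r1 (s a₁ a₂ : ℝ) : ℝ := s - (s - a₂)^2 - 4 / (2 - a₂)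
noncomputable def g (x : ℝ) : ℝ := x - 4 / (2 - x)

/-- Discounted value to agent 1 of the joint stationary deterministic profile
`(f₁, f₂)` (transitions `s' = a₁`, i.e. driven by `f₁`). -/
noncomputable def V1 (γ : ℝ) (f₁ f₂ : ℝ → ℝ) (s : ℝ) : ℝ :=
    ∑' t : ℕ, γ ^ t * r1 (f₁^[t] s) (f₁ (f₁^[t] s)) (f₂ (f₁^[t] s))

lemma V1_const (γ : ℝ) (hγ0 : 0 < γ) (hγ1 : γ < 1) (c s : ℝ) :
    V1 γ (fun _ => c) (fun x => x) s = g s + γ / (1 - γ) * g c := by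
  have hf : (fun t : ℕ => γ ^ t * r1 ((fun _ : ℝ => c)^[t] s)
        ((fun _ => c) ((fun _ : ℝ => c)^[t] s)) ((fun x => x) ((fun _ : ℝ => c)^[t] s)))
      = fun t : ℕ => γ ^ t * g c + (if t = 0 then g s - g c else 0) := by
    funext t
    cases t with
    | zero => simp [r1, g]
    | succ n => simp [Function.iterate_succ_apply', r1, g]
  have hs1 : Summable (fun t : ℕ => γ ^ t * g c) :=
    (summable_geometric_of_lt_one hγ0.le hγ1).mul_right _
  have hs2 : Summable (fun t : ℕ => if t = 0 then g s - g c else 0) := by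
    apply summable_of_ne_finset_zero (s := {0})
    intro t ht
    simp at ht
    simp [ht]
  have h1 : ∑' t : ℕ, γ ^ t * g c = (1 - γ)⁻¹ * g c := by
    rw [tsum_mul_right, tsum_geometric_of_lt_one hγ0.le hγ1]
  have h2 : ∑' t : ℕ, (if t = 0 then g s - g c else 0) = g s - g c := tsum_ite_eq 0 _
  have hne : (1 : ℝ) - γ ≠ 0 := by linarith
  rw [V1, hf, Summable.tsum_add hs1 hs2, h1, h2]
  field_simp
  ring

theorem dual_optimum_not_nash (γ : ℝ) (hγ : γ ∈ Ioo (0:ℝ) 1) :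
    -- the closed-form value comparison:
    (∀ s ∈ Icc (0:ℝ) 1,
      g s + γ / (1 - γ) * (1 - 4) < g s + γ / (1 - γ) * (0 - 2)) ∧
    -- hence (a₁, a₂) = (1, s) is not a Nash equilibrium: agent 1 has a
    -- profitable unilateral stationary deviation.
    ¬ (∀ f : ℝ → ℝ, MapsTo f (Icc (0:ℝ) 1) (Icc (0:ℝ) 1) →
        ∀ s ∈ Icc (0:ℝ) 1,
          V1 γ f (fun x => x) s ≤ V1 γ (fun _ => 1) (fun x => x) s) := by
  obtain ⟨hγ0, hγ1⟩ := hγ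
  have hpos : 0 < γ / (1 - γ) := div_pos hγ0 (by linarith)
  constructor
  · intro s _
    nlinarith
  · intro h
    have h0 : (0:ℝ) ∈ Icc (0:ℝ) 1 := by constructor <;> norm_num
    have := h (fun _ => 0) (fun x _ => h0) 0 h0
    rw [V1_const γ hγ0 hγ1 0 0, V1_const γ hγ0 hγ1 1 0] at this
    have hg0 : g 0 = -2 := by norm_num [g]
    have hg1 : g 1 = -3 := by norm_num [g]
    rw [hg0, hg1] at this
    nlinarith
end

section
/- Fix γ ∈ (0,1). In the two-agent stochastic game with payoffs r₁(s, a₁, a₂) = s - (s - a₂)² - 4/(2 - a₂), r₂(s, a₁, a₂) = s - (s - a₂)², and deterministic transition s' = a₁, the stationary deterministic joint strategy where agent 1 plays a₁ = 0 and agent 2 plays a₂ = s at every state s is a Nash equilibrium: neither agent can improve their discounted value at any state by a unilateral deviation to another stationary deterministic strategy. -/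
open Set

noncomputable def r2 (s a₁ a₂ : ℝ) : ℝ := s - (s - a₂)^2

noncomputable def V2 (γ : ℝ) (f₁ f₂ : ℝ → ℝ) (s : ℝ) : ℝ :=
    ∑' t : ℕ, γ ^ t * r2 (f₁^[t] s) (f₁ (f₁^[t] s)) (f₂ (f₁^[t] s))

lemma geom_summable {γ : ℝ} (h0 : 0 ≤ γ) (h1 : γ < 1) {u : ℕ → ℝ} {C : ℝ}
    (hu : ∀ t, |u t| ≤ C) : Summable (fun t => γ ^ t * u t) := by
  apply Summable.of_norm_bounded
    ((summable_geometric_of_lt_one h0 h1).mul_right C)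
  intro t
  rw [Real.norm_eq_abs, abs_mul, abs_pow, abs_of_nonneg h0]
  exact mul_le_mul_of_nonneg_left (hu t) (pow_nonneg h0 t)

lemma r1_bound {x : ℝ} (hx : x ∈ Icc (0:ℝ) 1) (a : ℝ) : |r1 x a x| ≤ 5 := by
  obtain ⟨h0, h1⟩ := hx
  have h2 : (1:ℝ) ≤ 2 - x := by linarith
  have hpos : (0:ℝ) < 2 - x := by linarith
  have hub : 4 / (2 - x) ≤ 4 := by
    rw [div_le_iff₀ hpos]; nlinarith
  have hlb : (0:ℝ) ≤ 4 / (2 - x) := by positivity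
  rw [abs_le]
  unfold r1
  constructor <;> nlinarith

lemma r1_le {x : ℝ} (hx : x ∈ Icc (0:ℝ) 1) (a b : ℝ) : r1 x a x ≤ r1 0 b 0 := by
  obtain ⟨h0, h1⟩ := hx
  have hpos : (0:ℝ) < 2 - x := by linarith
  have key : x + 2 ≤ 4 / (2 - x) := by
    rw [le_div_iff₀ hpos]; nlinarith
  unfold r1
  norm_num
  linarith

lemma r2_bound {x a : ℝ} (hx : x ∈ Icc (0:ℝ) 1) (ha : a ∈ Icc (0:ℝ) 1) (b : ℝ) :
    |r2 x b a| ≤ 2 := by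
  obtain ⟨h0, h1⟩ := hx
  obtain ⟨g0, g1⟩ := ha
  rw [abs_le]
  unfold r2
  constructor <;> nlinarith

lemma const_mapsTo : MapsTo (fun _ : ℝ => (0:ℝ)) (Icc (0:ℝ) 1) (Icc (0:ℝ) 1) := by
  intro x _; constructor <;> norm_num

/-- The profile (agent 1 plays `a₁ = 0`, agent 2 plays `a₂ = s`) is a Nash
equilibrium: no agent improves its value at any state by a unilateral
deviation to another stationary deterministic strategy. -/
theorem zero_id_is_nash (γ : ℝ) (hγ : γ ∈ Ioo (0:ℝ) 1) :
    (∀ f : ℝ → ℝ, MapsTo f (Icc (0:ℝ) 1) (Icc (0:ℝ) 1) →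
      ∀ s ∈ Icc (0:ℝ) 1,
        V1 γ f (fun x => x) s ≤ V1 γ (fun _ => 0) (fun x => x) s) ∧
    (∀ f : ℝ → ℝ, MapsTo f (Icc (0:ℝ) 1) (Icc (0:ℝ) 1) →
      ∀ s ∈ Icc (0:ℝ) 1,
        V2 γ (fun _ => 0) f s ≤ V2 γ (fun _ => 0) (fun x => x) s) := by
  obtain ⟨hγ0, hγ1⟩ := hγ
  constructor
  · intro f hf s hs
    unfold V1
    have hL : Summable (fun t : ℕ =>
        γ ^ t * r1 (f^[t] s) (f (f^[t] s)) ((fun x => x) (f^[t] s))) :=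
      geom_summable hγ0.le hγ1 (fun t => r1_bound (hf.iterate t hs) _)
    have hR : Summable (fun t : ℕ =>
        γ ^ t * r1 ((fun _ => (0:ℝ))^[t] s) ((fun _ => (0:ℝ)) ((fun _ => (0:ℝ))^[t] s))
          ((fun x => x) ((fun _ => (0:ℝ))^[t] s))) :=
      geom_summable hγ0.le hγ1 (fun t => r1_bound (const_mapsTo.iterate t hs) _)
    refine Summable.tsum_le_tsum (fun t => ?_) hL hR
    cases t with
    | zero => simp [r1]
    | succ n =>
      have h0 : ((fun _ => (0:ℝ))^[n+1] s) = 0 := by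
        rw [Function.iterate_succ_apply']
      simp only [h0]
      exact mul_le_mul_of_nonneg_left
        (r1_le (hf.iterate (n+1) hs) _ _) (pow_nonneg hγ0.le _)
  · intro f hf s hs
    unfold V2
    have hL : Summable (fun t : ℕ =>
        γ ^ t * r2 ((fun _ => (0:ℝ))^[t] s) ((fun _ => (0:ℝ)) ((fun _ => (0:ℝ))^[t] s))
          (f ((fun _ => (0:ℝ))^[t] s))) :=
      geom_summable hγ0.le hγ1
        (fun t => r2_bound (const_mapsTo.iterate t hs)
          (hf (const_mapsTo.iterate t hs)) _)
    have hR : Summable (fun t : ℕ =>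
        γ ^ t * r2 ((fun _ => (0:ℝ))^[t] s) ((fun _ => (0:ℝ)) ((fun _ => (0:ℝ))^[t] s))
          ((fun x => x) ((fun _ => (0:ℝ))^[t] s))) :=
      geom_summable hγ0.le hγ1
        (fun t => r2_bound (const_mapsTo.iterate t hs) (const_mapsTo.iterate t hs) _)
    refine Summable.tsum_le_tsum (fun t => ?_) hL hR
    apply mul_le_mul_of_nonneg_left _ (pow_nonneg hγ0.le _)
    set x := (fun _ => (0:ℝ))^[t] s
    show r2 x 0 (f x) ≤ r2 x 0 x
    unfold r2
    nlinarith [sq_nonneg (x - f x)]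
end

section
/- There exists a two-agent discounted stochastic game G with continuous state and action spaces [0,1] that is a one-shot potential stochastic game with potential Φ satisfying state transitivity, such that the unique optimal deterministic stationary policy of the dual MDP (S, A, Φ, p) is not a Nash equilibrium of G. -/
open Set

/-- Discounted value with per-step payoff `r(s, a₁, a₂)` under the joint
stationary deterministic profile `(f₁, f₂)`; transition is `s' = a₁`. -/
noncomputable def val (r : ℝ → ℝ → ℝ → ℝ) (γ : ℝ) (f₁ f₂ : ℝ → ℝ) (s : ℝ) : ℝ :=
  ∑' t : ℕ, γ ^ t * r (f₁^[t] s) (f₁ (f₁^[t] s)) (f₂ (f₁^[t] s))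

/-- The potential `Φ(s,a₁,a₂) = s - (s - a₂)²`. -/
noncomputable def Phi (s _a₁ a₂ : ℝ) : ℝ := s - (s - a₂) ^ 2

/-- Player 1's payoff `r₁(s,a₁,a₂) = s - (s - a₂)² - 4/(2 - a₂)`. -/
noncomputable def R1 (s _a₁ a₂ : ℝ) : ℝ := s - (s - a₂) ^ 2 - 4 / (2 - a₂)

private lemma summable_aux {γ : ℝ} (h0 : 0 ≤ γ) (h1 : γ < 1) (u : ℕ → ℝ) (C : ℝ)
    (hb : ∀ t, |u t| ≤ C) : Summable (fun t => γ ^ t * u t) := by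
  apply Summable.of_norm_bounded
    ((summable_geometric_of_lt_one h0 h1).mul_right C)
  intro t
  rw [Real.norm_eq_abs, abs_mul, abs_pow, abs_of_nonneg h0]
  exact mul_le_mul_of_nonneg_left (hb t) (pow_nonneg h0 t)

private lemma iter_const_one (s : ℝ) :
    ∀ t : ℕ, ((fun _ : ℝ => (1:ℝ))^[t]) s = if t = 0 then s else 1
  | 0 => rfl
  | (n+1) => by rw [Function.iterate_succ_apply']; simp

/-- Closed form of the terms of the value of `(const 1, id)` for `Phi`. -/
private lemma val_f_Phi (γ : ℝ) (s : ℝ) :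
    val Phi γ (fun _ => 1) id s = ∑' t : ℕ, γ ^ t * (if t = 0 then s else 1) := by
  unfold val
  apply tsum_congr
  intro t
  rw [iter_const_one]
  cases t with
  | zero => simp [Phi]
  | succ n => simp [Phi]

/-- There is a two-agent discounted stochastic game on `[0,1]` which is a
one-shot potential game with potential `Φ` satisfying state transitivity,
yet the unique optimal deterministic stationary policy of the dual MDP
`(S, A, Φ, p)` is not a Nash equilibrium of the game. -/
theorem counterexample_to_mguni :
    ∃ r₁ r₂ Φ : ℝ → ℝ → ℝ → ℝ,
      -- one-shot potential game at every state:
      (∀ s ∈ Icc (0:ℝ) 1, ∀ a₁ ∈ Icc (0:ℝ) 1, ∀ a₁' ∈ Icc (0:ℝ) 1, ∀ a₂ ∈ Icc (0:ℝ) 1,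
        r₁ s a₁ a₂ - r₁ s a₁' a₂ = Φ s a₁ a₂ - Φ s a₁' a₂) ∧
      (∀ s ∈ Icc (0:ℝ) 1, ∀ a₁ ∈ Icc (0:ℝ) 1, ∀ a₂ ∈ Icc (0:ℝ) 1, ∀ a₂' ∈ Icc (0:ℝ) 1,
        r₂ s a₁ a₂ - r₂ s a₁ a₂' = Φ s a₁ a₂ - Φ s a₁ a₂') ∧
      -- state transitivity:
      (∀ s ∈ Icc (0:ℝ) 1, ∀ s' ∈ Icc (0:ℝ) 1, ∀ a₁ ∈ Icc (0:ℝ) 1, ∀ a₂ ∈ Icc (0:ℝ) 1,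
        r₁ s a₁ a₂ - r₁ s' a₁ a₂ = Φ s a₁ a₂ - Φ s' a₁ a₂ ∧
        r₂ s a₁ a₂ - r₂ s' a₁ a₂ = Φ s a₁ a₂ - Φ s' a₁ a₂) ∧
      -- for every discount factor γ ∈ (0,1):
      ∀ γ ∈ Ioo (0:ℝ) 1,
        ∃ f₁ f₂ : ℝ → ℝ,
          MapsTo f₁ (Icc (0:ℝ) 1) (Icc (0:ℝ) 1) ∧
          MapsTo f₂ (Icc (0:ℝ) 1) (Icc (0:ℝ) 1) ∧
          -- (f₁, f₂) is optimal for the dual MDP with payoff Φ: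
          (∀ g₁ g₂ : ℝ → ℝ,
            MapsTo g₁ (Icc (0:ℝ) 1) (Icc (0:ℝ) 1) →
            MapsTo g₂ (Icc (0:ℝ) 1) (Icc (0:ℝ) 1) →
            ∀ s ∈ Icc (0:ℝ) 1, val Φ γ g₁ g₂ s ≤ val Φ γ f₁ f₂ s) ∧
          -- and it is the unique such optimal deterministic stationary policy:
          (∀ g₁ g₂ : ℝ → ℝ,
            MapsTo g₁ (Icc (0:ℝ) 1) (Icc (0:ℝ) 1) →
            MapsTo g₂ (Icc (0:ℝ) 1) (Icc (0:ℝ) 1) →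
            (∀ s ∈ Icc (0:ℝ) 1, val Φ γ f₁ f₂ s ≤ val Φ γ g₁ g₂ s) →
            EqOn g₁ f₁ (Icc (0:ℝ) 1) ∧ EqOn g₂ f₂ (Icc (0:ℝ) 1)) ∧
          -- yet it is not a Nash equilibrium of the original game:
          ¬ ((∀ g₁ : ℝ → ℝ, MapsTo g₁ (Icc (0:ℝ) 1) (Icc (0:ℝ) 1) →
                ∀ s ∈ Icc (0:ℝ) 1, val r₁ γ g₁ f₂ s ≤ val r₁ γ f₁ f₂ s) ∧
             (∀ g₂ : ℝ → ℝ, MapsTo g₂ (Icc (0:ℝ) 1) (Icc (0:ℝ) 1) →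
                ∀ s ∈ Icc (0:ℝ) 1, val r₂ γ f₁ g₂ s ≤ val r₂ γ f₁ f₂ s)) := by
  refine ⟨R1, Phi, Phi, ?_, ?_, ?_, ?_⟩
  · intro s _ a₁ _ a₁' _ a₂ _; simp [R1, Phi]
  · intro s _ a₁ _ a₂ _ a₂' _; ring
  · intro s _ s' _ a₁ _ a₂ _
    refine ⟨?_, by ring⟩
    unfold R1 Phi; ring
  · intro γ hγ
    obtain ⟨hγ0, hγ1⟩ := hγ
    have hγ0' : (0:ℝ) ≤ γ := le_of_lt hγ0
    -- summability of the reference sequence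
    have hsum_b : ∀ s ∈ Icc (0:ℝ) 1,
        Summable (fun t : ℕ => γ ^ t * (if t = 0 then s else 1)) := by
      intro s hs
      refine summable_aux hγ0' hγ1 _ 1 (fun t => ?_)
      obtain ⟨h0, h1⟩ := hs
      by_cases h : t = 0 <;> simp [h, abs_le] <;> constructor <;> linarith
    -- summability of the terms of any admissible policy for Phi
    have hsum_g : ∀ (g₁ g₂ : ℝ → ℝ), MapsTo g₁ (Icc (0:ℝ) 1) (Icc (0:ℝ) 1) →
        MapsTo g₂ (Icc (0:ℝ) 1) (Icc (0:ℝ) 1) → ∀ s ∈ Icc (0:ℝ) 1,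
        Summable (fun t : ℕ =>
          γ ^ t * Phi (g₁^[t] s) (g₁ (g₁^[t] s)) (g₂ (g₁^[t] s))) := by
      intro g₁ g₂ hg₁ hg₂ s hs
      refine summable_aux hγ0' hγ1 _ 1 (fun t => ?_)
      have hx : g₁^[t] s ∈ Icc (0:ℝ) 1 := hg₁.iterate t hs
      have ha : g₂ (g₁^[t] s) ∈ Icc (0:ℝ) 1 := hg₂ hx
      obtain ⟨hx0, hx1⟩ := hx
      obtain ⟨ha0, ha1⟩ := ha
      rw [abs_le]
      unfold Phi
      constructor <;> nlinarith [sq_nonneg (g₁^[t] s - g₂ (g₁^[t] s))]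
    -- termwise domination
    have hterm : ∀ (g₁ g₂ : ℝ → ℝ), MapsTo g₁ (Icc (0:ℝ) 1) (Icc (0:ℝ) 1) →
        MapsTo g₂ (Icc (0:ℝ) 1) (Icc (0:ℝ) 1) → ∀ s ∈ Icc (0:ℝ) 1, ∀ t : ℕ,
        γ ^ t * Phi (g₁^[t] s) (g₁ (g₁^[t] s)) (g₂ (g₁^[t] s)) ≤
          γ ^ t * (if t = 0 then s else 1) := by
      intro g₁ g₂ hg₁ hg₂ s hs t
      have hx : g₁^[t] s ∈ Icc (0:ℝ) 1 := hg₁.iterate t hs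
      obtain ⟨hx0, hx1⟩ := hx
      refine mul_le_mul_of_nonneg_left ?_ (pow_nonneg hγ0' t)
      by_cases h : t = 0
      · subst h
        simp only [Function.iterate_zero, id_eq]
        rw [if_true]
        unfold Phi
        nlinarith [sq_nonneg (s - g₂ s)]
      · rw [if_neg h]
        unfold Phi
        nlinarith [sq_nonneg (g₁^[t] s - g₂ (g₁^[t] s))]
    -- optimality of (const 1, id)
    have hopt : ∀ (g₁ g₂ : ℝ → ℝ), MapsTo g₁ (Icc (0:ℝ) 1) (Icc (0:ℝ) 1) →
        MapsTo g₂ (Icc (0:ℝ) 1) (Icc (0:ℝ) 1) → ∀ s ∈ Icc (0:ℝ) 1,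
        val Phi γ g₁ g₂ s ≤ val Phi γ (fun _ => 1) id s := by
      intro g₁ g₂ hg₁ hg₂ s hs
      rw [val_f_Phi]
      unfold val
      exact Summable.tsum_le_tsum (hterm g₁ g₂ hg₁ hg₂ s hs) (hsum_g g₁ g₂ hg₁ hg₂ s hs)
        (hsum_b s hs)
    refine ⟨(fun _ => 1), id, fun x _ => ⟨zero_le_one, le_refl 1⟩, mapsTo_id _,
      hopt, ?_, ?_⟩
    · -- uniqueness
      intro g₁ g₂ hg₁ hg₂ hge
      have heq : ∀ s ∈ Icc (0:ℝ) 1,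
          val Phi γ g₁ g₂ s = val Phi γ (fun _ => 1) id s :=
        fun s hs => le_antisymm (hopt g₁ g₂ hg₁ hg₂ s hs) (hge s hs)
      constructor
      · intro s hs
        by_contra hne
        have hlt : val Phi γ g₁ g₂ s < val Phi γ (fun _ => 1) id s := by
          rw [val_f_Phi]
          unfold val
          refine Summable.tsum_lt_tsum (i := 1) (hterm g₁ g₂ hg₁ hg₂ s hs) ?_
            (hsum_g g₁ g₂ hg₁ hg₂ s hs) (hsum_b s hs)
          have hx : g₁^[1] s ∈ Icc (0:ℝ) 1 := hg₁.iterate 1 hs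
          rw [Function.iterate_one] at hx ⊢
          have hlt1 : g₁ s < 1 := lt_of_le_of_ne hx.2 hne
          have ha : g₂ (g₁ s) ∈ Icc (0:ℝ) 1 := hg₂ hx
          rw [if_neg one_ne_zero, mul_one, pow_one]
          have hPhi : Phi (g₁ s) (g₁ (g₁ s)) (g₂ (g₁ s)) ≤ g₁ s := by
            unfold Phi; nlinarith [sq_nonneg (g₁ s - g₂ (g₁ s))]
          calc γ * Phi (g₁ s) (g₁ (g₁ s)) (g₂ (g₁ s))
              ≤ γ * g₁ s := mul_le_mul_of_nonneg_left hPhi hγ0'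
            _ < γ := by nlinarith
        exact absurd (heq s hs) (ne_of_lt hlt)
      · intro s hs
        by_contra hne
        have hlt : val Phi γ g₁ g₂ s < val Phi γ (fun _ => 1) id s := by
          rw [val_f_Phi]
          unfold val
          refine Summable.tsum_lt_tsum (i := 0) (hterm g₁ g₂ hg₁ hg₂ s hs) ?_
            (hsum_g g₁ g₂ hg₁ hg₂ s hs) (hsum_b s hs)
          simp only [Function.iterate_zero, id_eq, pow_zero, one_mul]
          rw [if_true]
          have hsg : s - g₂ s ≠ 0 := sub_ne_zero.mpr (fun h => hne (by simpa using h.symm))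
          have hpos : 0 < (s - g₂ s) ^ 2 :=
            lt_of_le_of_ne (sq_nonneg _) (Ne.symm (pow_ne_zero 2 hsg))
          unfold Phi
          nlinarith [hpos]
        exact absurd (heq s hs) (ne_of_lt hlt)
    · -- not a Nash equilibrium
      rintro ⟨h1, -⟩
      have h := h1 (fun _ => 0) (fun x _ => ⟨le_refl 0, zero_le_one⟩) 0
        ⟨le_refl 0, zero_le_one⟩
      have hA : val R1 γ (fun _ => 0) id 0 = ∑' t : ℕ, γ ^ t * (-2) := by
        unfold val
        apply tsum_congr
        intro t
        have h0 : ((fun _ : ℝ => (0:ℝ))^[t]) 0 = 0 := Function.iterate_fixed rfl t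
        rw [h0]
        unfold R1
        norm_num
      have hB : val R1 γ (fun _ => 1) id 0 =
          ∑' t : ℕ, γ ^ t * (if t = 0 then (-2:ℝ) else -3) := by
        unfold val
        apply tsum_congr
        intro t
        rw [iter_const_one]
        cases t with
        | zero => simp; unfold R1; norm_num
        | succ n => simp; unfold R1; norm_num
      have hlt : (∑' t : ℕ, γ ^ t * (if t = 0 then (-2:ℝ) else -3)) <
          ∑' t : ℕ, γ ^ t * (-2) := by
        refine Summable.tsum_lt_tsum (i := 1) ?_ ?_ ?_ ?_
        · intro t
          refine mul_le_mul_of_nonneg_left ?_ (pow_nonneg hγ0' t)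
          by_cases ht : t = 0 <;> simp [ht] <;> norm_num
        · rw [if_neg one_ne_zero, pow_one]
          nlinarith
        · refine summable_aux hγ0' hγ1 _ 3 (fun t => ?_)
          by_cases ht : t = 0 <;> simp [ht] <;> norm_num
        · exact summable_aux hγ0' hγ1 _ 2 (fun t => by norm_num)
      rw [hA, hB] at h
      exact absurd h (not_le.mpr hlt)
end

section
/- If a stochastic game has agent-independent transitions (p(s' | s, a) = p(s' | s)) and is a one-shot potential game at each state with potential Φ, and additionally each agent's payoff differs from Φ by a term independent of that agent's own action (rᵢ(s, a) = Φ(s, a) + vᵢ(s, a₋ᵢ)), then for any unilateral deviation by agent i from πᵢ to πᵢ' the difference in agent i's discounted value at each state equals the difference in the discounted value of Φ at that state (i.e., Φ's value function is a Markov potential function). -/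
open Set Finset

variable {n : ℕ}

/-- State distribution at time `t` of a Markov chain on a finite state space
with action-independent transition kernel `q`, started at `s`. -/
noncomputable def stateDist {S : Type*} [Fintype S] [DecidableEq S]
    (q : S → S → ℝ) (s : S) : ℕ → S → ℝ
  | 0 => fun s' => if s' = s then 1 else 0
  | (t + 1) => fun s' => ∑ u : S, stateDist q s t u * q u s'

/-- Expected value of `F s` under the product of the independent mixed
strategies `π i s`. -/
noncomputable def mixedExp {S : Type*} {A : Fin n → Type*}
    [∀ i, Fintype (A i)] (π : ∀ i, S → A i → ℝ)
    (F : S → (∀ i, A i) → ℝ) (s : S) : ℝ :=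
  ∑ a : ∀ i, A i, (∏ i, π i s (a i)) * F s a

/-- Discounted value of the payoff function `F` under joint mixed stationary
strategy `π`, starting from `s`, with action-independent transitions `q`. -/
noncomputable def value {S : Type*} [Fintype S] [DecidableEq S]
    {A : Fin n → Type*} [∀ i, Fintype (A i)]
    (γ : ℝ) (q : S → S → ℝ) (π : ∀ i, S → A i → ℝ)
    (F : S → (∀ i, A i) → ℝ) (s : S) : ℝ :=
  ∑' t : ℕ, γ ^ t * ∑ s' : S, stateDist q s t s' * mixedExp π F s'

/-- A mixed stationary strategy: a probability distribution over actions at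
each state. -/
def isStrategy {S : Type*} [Fintype S] {A : Type*} [Fintype A]
    (σ : S → A → ℝ) : Prop :=
  ∀ s, (∀ a, 0 ≤ σ s a) ∧ ∑ a : A, σ s a = 1


/-- The key one-shot invariance: a sum weighted by a product of per-agent
weights, where the payoff does not depend on agent `i`'s action, is unchanged
when agent `i`'s weight distribution (summing to 1) is replaced. -/
lemma sum_pi_indep {A : Fin n → Type} [∀ i, Fintype (A i)] [∀ i, DecidableEq (A i)]
    (i : Fin n) (σ τ : A i → ℝ) (hσ : ∑ b, σ b = 1) (hτ : ∑ b, τ b = 1)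
    (w : ∀ j, A j → ℝ) (G : (∀ j, A j) → ℝ)
    (hG : ∀ a a' : ∀ j, A j, (∀ j, j ≠ i → a j = a' j) → G a = G a') :
    ∑ a : ∀ j, A j, (σ (a i) * ∏ j ∈ Finset.univ.erase i, w j (a j)) * G a
      = ∑ a : ∀ j, A j, (τ (a i) * ∏ j ∈ Finset.univ.erase i, w j (a j)) * G a := by
  classical
  haveI : Nonempty (A i) := by
    by_contra h
    rw [not_nonempty_iff] at h
    rw [Finset.univ_eq_empty, Finset.sum_empty] at hσ
    norm_num at hσ
  have key : ∀ (ρ : A i → ℝ), (∑ b, ρ b = 1) →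
      ∑ a : ∀ j, A j, (ρ (a i) * ∏ j ∈ Finset.univ.erase i, w j (a j)) * G a
        = ∑ c : ∀ j : { j // j ≠ i }, A j,
            (∏ j ∈ Finset.univ.erase i, w j ((Equiv.piSplitAt i A).symm
              (Classical.arbitrary _, c) j)) *
            G ((Equiv.piSplitAt i A).symm (Classical.arbitrary _, c)) := by
    intro ρ hρ
    have : ∀ (b : A i) (c : ∀ j : { j // j ≠ i }, A j),
        ∀ j ∈ Finset.univ.erase i,
          w j ((Equiv.piSplitAt i A).symm (b, c) j)
            = w j ((Equiv.piSplitAt i A).symm (Classical.arbitrary _, c) j) := by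
      intro b c j hj
      have hji : j ≠ i := (Finset.mem_erase.mp hj).1
      simp [Equiv.piSplitAt_symm_apply, hji]
    rw [← Equiv.sum_comp (Equiv.piSplitAt i A).symm, Fintype.sum_prod_type]
    have hGc : ∀ (b : A i) (c : ∀ j : { j // j ≠ i }, A j),
        G ((Equiv.piSplitAt i A).symm (b, c))
          = G ((Equiv.piSplitAt i A).symm (Classical.arbitrary _, c)) := by
      intro b c
      apply hG
      intro j hj
      simp [Equiv.piSplitAt_symm_apply, hj]
    calc ∑ b : A i, ∑ c,
          (ρ (((Equiv.piSplitAt i A).symm (b, c)) i) *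
            ∏ j ∈ Finset.univ.erase i, w j ((Equiv.piSplitAt i A).symm (b, c) j)) *
            G ((Equiv.piSplitAt i A).symm (b, c))
        = ∑ b : A i, ρ b * ∑ c,
            (∏ j ∈ Finset.univ.erase i, w j ((Equiv.piSplitAt i A).symm
              (Classical.arbitrary _, c) j)) *
            G ((Equiv.piSplitAt i A).symm (Classical.arbitrary _, c)) := by
          refine Finset.sum_congr rfl fun b _ => ?_
          rw [Finset.mul_sum]
          refine Finset.sum_congr rfl fun c _ => ?_
          rw [Finset.prod_congr rfl (this b c), hGc b c]
          have hbi : ((Equiv.piSplitAt i A).symm (b, c)) i = b := by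
            simp [Equiv.piSplitAt_symm_apply]
          rw [hbi]; ring
      _ = _ := by rw [← Finset.sum_mul, hρ, one_mul]
  rw [key σ hσ, key τ hτ]

lemma stateDist_nonneg_sum {S : Type*} [Fintype S] [DecidableEq S]
    (q : S → S → ℝ) (hq : ∀ s, (∀ s', 0 ≤ q s s') ∧ ∑ s' : S, q s s' = 1)
    (s : S) (t : ℕ) :
    (∀ s', 0 ≤ stateDist q s t s') ∧ ∑ s' : S, stateDist q s t s' = 1 := by
  induction t with
  | zero =>
    constructor
    · intro s'; simp only [stateDist]; split <;> norm_num
    · simp [stateDist]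
  | succ t ih =>
    constructor
    · intro s'
      simp only [stateDist]
      exact Finset.sum_nonneg fun u _ => mul_nonneg (ih.1 u) ((hq u).1 s')
    · simp only [stateDist]
      rw [Finset.sum_comm]
      calc ∑ u : S, ∑ s' : S, stateDist q s t u * q u s'
          = ∑ u : S, stateDist q s t u * ∑ s' : S, q u s' := by
            simp [Finset.mul_sum]
        _ = 1 := by
            simp only [fun u => (hq u).2, mul_one]; exact ih.2

lemma summable_value_aux {S : Type*} [Fintype S] [DecidableEq S]
    (q : S → S → ℝ) (hq : ∀ s, (∀ s', 0 ≤ q s s') ∧ ∑ s' : S, q s s' = 1)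
    (γ : ℝ) (hγ : γ ∈ Ico (0:ℝ) 1) (m : S → ℝ) (s : S) :
    Summable (fun t : ℕ => γ ^ t * ∑ s' : S, stateDist q s t s' * m s') := by
  obtain ⟨hγ0, hγ1⟩ := hγ
  have hM : ∀ t, ‖γ ^ t * ∑ s' : S, stateDist q s t s' * m s'‖
      ≤ (∑ s' : S, |m s'|) * γ ^ t := by
    intro t
    rw [Real.norm_eq_abs, abs_mul, abs_pow, abs_of_nonneg hγ0, mul_comm]
    gcongr
    calc |∑ s' : S, stateDist q s t s' * m s'|
        ≤ ∑ s' : S, |stateDist q s t s' * m s'| := Finset.abs_sum_le_sum_abs _ _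
      _ ≤ ∑ s' : S, |m s'| := by
          refine Finset.sum_le_sum fun s' _ => ?_
          rw [abs_mul, abs_of_nonneg ((stateDist_nonneg_sum q hq s t).1 s')]
          have h1 : stateDist q s t s' ≤ 1 := by
            rw [← (stateDist_nonneg_sum q hq s t).2]
            exact Finset.single_le_sum
              (fun u _ => (stateDist_nonneg_sum q hq s t).1 u) (Finset.mem_univ s')
          nlinarith [abs_nonneg (m s'), (stateDist_nonneg_sum q hq s t).1 s']
  exact Summable.of_norm_bounded
    ((summable_geometric_of_lt_one hγ0 hγ1).mul_left _) hM

lemma mixedExp_add {S : Type*} {A : Fin n → Type*} [∀ i, Fintype (A i)]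
    (π : ∀ i, S → A i → ℝ) (F G : S → (∀ i, A i) → ℝ) (s : S) :
    mixedExp π (fun s a => F s a + G s a) s = mixedExp π F s + mixedExp π G s := by
  simp [mixedExp, mul_add, Finset.sum_add_distrib]

lemma value_add {S : Type*} [Fintype S] [DecidableEq S]
    {A : Fin n → Type*} [∀ i, Fintype (A i)]
    (γ : ℝ) (hγ : γ ∈ Ico (0:ℝ) 1) (q : S → S → ℝ)
    (hq : ∀ s, (∀ s', 0 ≤ q s s') ∧ ∑ s' : S, q s s' = 1)
    (π : ∀ i, S → A i → ℝ) (F G : S → (∀ i, A i) → ℝ) (s : S) :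
    value γ q π (fun s a => F s a + G s a) s
      = value γ q π F s + value γ q π G s := by
  unfold value
  rw [← Summable.tsum_add (summable_value_aux q hq γ hγ (mixedExp π F) s)
    (summable_value_aux q hq γ hγ (mixedExp π G) s)]
  congr 1
  ext t
  simp only [mixedExp_add, mul_add, Finset.sum_add_distrib]

lemma value_congr_mixedExp {S : Type*} [Fintype S] [DecidableEq S]
    {A : Fin n → Type*} [∀ i, Fintype (A i)]
    (γ : ℝ) (q : S → S → ℝ) (π σ : ∀ i, S → A i → ℝ)
    (F G : S → (∀ i, A i) → ℝ)
    (h : ∀ s, mixedExp π F s = mixedExp σ G s) (s : S) :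
    value γ q π F s = value γ q σ G s := by
  unfold value
  congr 1
  ext t
  congr 1
  exact Finset.sum_congr rfl fun s' _ => by rw [h s']

/-- With agent-independent transitions and a one-shot potential `Φ` such that
each `rᵢ` differs from `Φ` by a dummy term independent of agent `i`'s own
action, the discounted value of `Φ` is a Markov potential function: unilateral
deviations change agent `i`'s value exactly as they change `Φ`'s value. -/
theorem markov_potential_under_independent_transitions
    (S : Type) [Fintype S] [DecidableEq S]
    (A : Fin n → Type) [∀ i, Fintype (A i)] [∀ i, DecidableEq (A i)]
    (r : Fin n → S → (∀ j, A j) → ℝ) (Φ : S → (∀ j, A j) → ℝ)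
    (v : Fin n → S → (∀ j, A j) → ℝ)
    (q : S → S → ℝ) (hq : ∀ s, (∀ s', 0 ≤ q s s') ∧ ∑ s' : S, q s s' = 1)
    (γ : ℝ) (hγ : γ ∈ Ico (0:ℝ) 1)
    (hpot : ∀ (i : Fin n) (s : S) (a : ∀ j, A j) (a' : A i),
      r i s a - r i s (Function.update a i a') =
        Φ s a - Φ s (Function.update a i a'))
    (hdummy : ∀ (i : Fin n) (s : S) (a : ∀ j, A j),
      r i s a = Φ s a + v i s a)
    (hdummyIndep : ∀ (i : Fin n) (s : S) (a a' : ∀ j, A j),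
      (∀ j, j ≠ i → a j = a' j) → v i s a = v i s a') :
    ∀ (i : Fin n) (π : ∀ j, S → A j → ℝ) (π' : S → A i → ℝ),
      (∀ j, isStrategy (π j)) → isStrategy π' →
      ∀ s : S,
        value γ q π (r i) s - value γ q (Function.update π i π') (r i) s =
        value γ q π Φ s - value γ q (Function.update π i π') Φ s := by
  intro i π π' hπ hπ' s
  have hr : ∀ s a, r i s a = Φ s a + v i s a := fun s a => hdummy i s a
  have hreq : r i = fun s a => Φ s a + v i s a := by
    funext s a; exact hr s a
  have hme : ∀ s, mixedExp π (v i) s = mixedExp (Function.update π i π') (v i) s := by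
    intro s
    unfold mixedExp
    have hprod : ∀ (σ : ∀ j, S → A j → ℝ) (a : ∀ j, A j),
        (∏ j, σ j s (a j)) = σ i s (a i) * ∏ j ∈ Finset.univ.erase i, σ j s (a j) := by
      intro σ a
      rw [← Finset.mul_prod_erase Finset.univ (fun j => σ j s (a j)) (Finset.mem_univ i)]
    have hupd_erase : ∀ a : ∀ j, A j,
        (∏ j ∈ Finset.univ.erase i, Function.update π i π' j s (a j))
          = ∏ j ∈ Finset.univ.erase i, π j s (a j) := by
      intro a
      refine Finset.prod_congr rfl fun j hj => ?_
      rw [Function.update_of_ne (Finset.mem_erase.mp hj).1]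
    calc ∑ a : ∀ j, A j, (∏ j, π j s (a j)) * v i s a
        = ∑ a : ∀ j, A j,
            ((π i s) (a i) * ∏ j ∈ Finset.univ.erase i, π j s (a j)) * v i s a := by
          exact Finset.sum_congr rfl fun a _ => by rw [hprod π a]
      _ = ∑ a : ∀ j, A j,
            ((π' s) (a i) * ∏ j ∈ Finset.univ.erase i, π j s (a j)) * v i s a := by
          exact sum_pi_indep i (π i s) (π' s) ((hπ i) s).2 (hπ' s).2
            (fun j b => π j s b) (v i s) (fun a a' h => hdummyIndep i s a a' h)
      _ = ∑ a : ∀ j, A j, (∏ j, Function.update π i π' j s (a j)) * v i s a := by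
          refine Finset.sum_congr rfl fun a _ => ?_
          rw [hprod (Function.update π i π') a, hupd_erase a,
            Function.update_self]
  have h1 : value γ q π (r i) s = value γ q π Φ s + value γ q π (v i) s := by
    rw [hreq]; exact value_add γ hγ q hq π Φ (v i) s
  have h2 : value γ q (Function.update π i π') (r i) s
      = value γ q (Function.update π i π') Φ s
        + value γ q (Function.update π i π') (v i) s := by
    rw [hreq]; exact value_add γ hγ q hq _ Φ (v i) s
  have h3 : value γ q π (v i) s = value γ q (Function.update π i π') (v i) s :=
    value_congr_mixedExp γ q π (Function.update π i π') (v i) (v i) hme s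
  rw [h1, h2, h3]; ring
end
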